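/- Flag-state squasher (statistics preservation): Let H = H_s ⊕ H_l, and let {M_y = M_{y,s} ⊕ M_{y,l} : y = 1,…,J} be a POVM on H whose elements are block-diagonal with respect to this decomposition. Define the squashed POVM elements M̃_y = M_{y,s} ⊕ |y⟩⟨y| on H_s ⊕ C^J, and the squashing map Λ(ρ) = ρ_ss ⊕ Σ_{y=1}^J Tr(ρ_ll M_{y,l}) |y⟩⟨y|. Then for every density operator ρ on H and every y, Tr(ρ M_y) = Tr(Λ(ρ) M̃_y). -/

import Mathlib

/-!
Both sides split along the block decomposition, since the POVM elements are block-diagonal.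
The `H_s` blocks agree verbatim. On the flag register, `Λ(ρ)` is the diagonal matrix of the
outcome probabilities `Tr(ρ_ll M_{y,l})`, and `|y⟩⟨y|` reads off its `y`-th diagonal entry.
-/

open Matrix
open scoped ComplexOrder

/-- The flag-state squashing map `Λ`. -/
noncomputable def flagSquash {ds dl J : ℕ}
    (M : Fin J → Matrix (Fin dl) (Fin dl) ℂ)
    (ρ : Matrix (Fin ds ⊕ Fin dl) (Fin ds ⊕ Fin dl) ℂ) :
    Matrix (Fin ds ⊕ Fin J) (Fin ds ⊕ Fin J) ℂ :=
  Matrix.fromBlocks ρ.toBlocks₁₁ 0 0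
    (∑ y : Fin J, (ρ.toBlocks₂₂ * M y).trace • Matrix.single y y 1)

namespace Matrix

variable {l m R : Type*} [Fintype l] [Fintype m]

theorem trace_fromBlocks [AddCommMonoid R] (A : Matrix l l R) (B : Matrix l m R)
    (C : Matrix m l R) (D : Matrix m m R) :
    (fromBlocks A B C D).trace = A.trace + D.trace := by
  simp only [trace, diag, Fintype.sum_sum_type, fromBlocks_apply₁₁, fromBlocks_apply₂₂]

theorem trace_mul_fromBlocks_zero [NonUnitalNonAssocSemiring R]
    (ρ : Matrix (l ⊕ m) (l ⊕ m) R) (P : Matrix l l R) (Q : Matrix m m R) :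
    (ρ * fromBlocks P 0 0 Q).trace = (ρ.toBlocks₁₁ * P).trace + (ρ.toBlocks₂₂ * Q).trace := by
  conv_lhs => rw [← fromBlocks_toBlocks ρ]
  rw [fromBlocks_multiply, trace_fromBlocks]
  simp only [Matrix.mul_zero, add_zero, zero_add]

theorem trace_mul_single_same [DecidableEq m] [NonUnitalNonAssocSemiring R] (x : Matrix m m R)
    (i : m) (a : R) : (x * single i i a).trace = x i i * a := by
  rw [trace_mul_single, MulOpposite.smul_eq_mul_unop, MulOpposite.unop_op]

end Matrix

theorem flagSquash_eq_fromBlocks_diagonal {ds dl J : ℕ}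
    (M : Fin J → Matrix (Fin dl) (Fin dl) ℂ)
    (ρ : Matrix (Fin ds ⊕ Fin dl) (Fin ds ⊕ Fin dl) ℂ) :
    flagSquash M ρ =
      fromBlocks ρ.toBlocks₁₁ 0 0 (diagonal fun y => (ρ.toBlocks₂₂ * M y).trace) := by
  simp only [flagSquash, smul_single, smul_eq_mul, mul_one, sum_single_eq_diagonal]

theorem flagSquash_statistics_preserving_general {ds dl J : ℕ}
    (Ms : Fin J → Matrix (Fin ds) (Fin ds) ℂ)
    (Ml : Fin J → Matrix (Fin dl) (Fin dl) ℂ)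
    (ρ : Matrix (Fin ds ⊕ Fin dl) (Fin ds ⊕ Fin dl) ℂ)
    (y : Fin J) :
    (ρ * Matrix.fromBlocks (Ms y) 0 0 (Ml y)).trace
      = (flagSquash Ml ρ *
          Matrix.fromBlocks (Ms y) 0 0 (Matrix.single y y 1)).trace := by
  rw [flagSquash_eq_fromBlocks_diagonal, trace_mul_fromBlocks_zero, trace_mul_fromBlocks_zero,
    toBlocks_fromBlocks₁₁, toBlocks_fromBlocks₂₂, trace_mul_single_same, diagonal_apply_eq,
    mul_one]

/-- Flag-state squasher: statistics preservation.  For a block-diagonal POVM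
`M_y = M_{y,s} ⊕ M_{y,l}` and squashed POVM `M̃_y = M_{y,s} ⊕ |y⟩⟨y|`,
we have `Tr(ρ M_y) = Tr(Λ(ρ) M̃_y)` for every density operator `ρ`. -/
theorem flagSquash_statistics_preserving {ds dl J : ℕ}
    (Ms : Fin J → Matrix (Fin ds) (Fin ds) ℂ)
    (Ml : Fin J → Matrix (Fin dl) (Fin dl) ℂ)
    (hMsPos : ∀ y, (Ms y).PosSemidef) (hMlPos : ∀ y, (Ml y).PosSemidef)
    (hMsSum : ∑ y, Ms y = 1) (hMlSum : ∑ y, Ml y = 1)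
    (ρ : Matrix (Fin ds ⊕ Fin dl) (Fin ds ⊕ Fin dl) ℂ)
    (hρ : ρ.PosSemidef) (hρtr : ρ.trace = 1) (y : Fin J) :
    (ρ * Matrix.fromBlocks (Ms y) 0 0 (Ml y)).trace
      = (flagSquash Ml ρ *
          Matrix.fromBlocks (Ms y) 0 0 (Matrix.single y y 1)).trace :=
  flagSquash_statistics_preserving_general Ms Ml ρ y
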